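/- arXiv:1207.2229 — 5 statements merged into one kernel-verified Lean document; each statement's English description precedes it below -/
import Mathlib

section
/- For any unit vector w in R^n, the expectation over uniform x in {-1,1}^n of |w·x| is at least 1/√2. -/
open Finset

namespace KhinAux

noncomputable def r (b : Bool) : ℝ := if b then 1 else -1

lemma r_mul_self (b : Bool) : r b * r b = 1 := by cases b <;> simp [r]

lemma r_not (b : Bool) : r (!b) = - r b := by cases b <;> simp [r]

variable {n : ℕ}

noncomputable def chi (S : Finset (Fin n)) (x : Fin n → Bool) : ℝ := ∏ i ∈ S, r (x i)

lemma chi_dual (x y : Fin n → Bool) :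
    ∑ S : Finset (Fin n), chi S x * chi S y = if x = y then (2:ℝ)^n else 0 := by
  have h1 : ∀ S : Finset (Fin n), chi S x * chi S y = ∏ i ∈ S, (r (x i) * r (y i)) := by
    intro S; rw [chi, chi, ← Finset.prod_mul_distrib]
  simp_rw [h1]
  have h2 : ∑ S : Finset (Fin n), ∏ i ∈ S, (r (x i) * r (y i))
      = ∏ i : Fin n, (r (x i) * r (y i) + 1) := by
    rw [Finset.prod_add]
    rw [← Finset.powerset_univ]
    refine Finset.sum_congr rfl fun t _ => ?_
    simp
  rw [h2]
  by_cases h : x = y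
  · subst h
    rw [if_pos rfl]
    have : ∀ i : Fin n, r (x i) * r (x i) + 1 = 2 := fun i => by rw [r_mul_self]; norm_num
    simp_rw [this]
    simp
  · obtain ⟨i, hi⟩ := Function.ne_iff.mp h
    rw [if_neg h]
    apply Finset.prod_eq_zero (Finset.mem_univ i)
    cases hx : x i <;> cases hy : y i <;> simp_all [r]

lemma parseval (f g : (Fin n → Bool) → ℝ) :
    ∑ S : Finset (Fin n), (∑ x, f x * chi S x) * (∑ y, g y * chi S y)
      = 2^n * ∑ x, f x * g x := by
  calc ∑ S : Finset (Fin n), (∑ x, f x * chi S x) * (∑ y, g y * chi S y)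
      = ∑ S : Finset (Fin n), ∑ x, ∑ y, (f x * g y) * (chi S x * chi S y) := by
        refine Finset.sum_congr rfl fun S _ => ?_
        rw [Finset.sum_mul_sum]
        exact Finset.sum_congr rfl fun x _ => Finset.sum_congr rfl fun y _ => by ring
    _ = ∑ x, ∑ y, (f x * g y) * ∑ S : Finset (Fin n), chi S x * chi S y := by
        rw [Finset.sum_comm]
        refine Finset.sum_congr rfl fun x _ => ?_
        rw [Finset.sum_comm]
        exact Finset.sum_congr rfl fun y _ => (Finset.mul_sum _ _ _).symm
    _ = ∑ x, ∑ y, (f x * g y) * (if x = y then (2:ℝ)^n else 0) := by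
        simp_rw [chi_dual]
    _ = 2^n * ∑ x, f x * g x := by
        rw [Finset.mul_sum]
        refine Finset.sum_congr rfl fun x _ => ?_
        rw [Finset.sum_eq_single x]
        · simp [mul_comm]
        · intro y _ hy; rw [if_neg (Ne.symm hy), mul_zero]
        · intro h; exact absurd (Finset.mem_univ x) h

noncomputable def fl (i : Fin n) (x : Fin n → Bool) : Fin n → Bool :=
  Function.update x i (!(x i))

lemma fl_apply_ne (i j : Fin n) (x : Fin n → Bool) (h : j ≠ i) : fl i x j = x j :=
  Function.update_of_ne h _ _

lemma fl_apply_self (i : Fin n) (x : Fin n → Bool) : fl i x i = !(x i) :=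
  Function.update_self _ _ _

lemma fl_invol (i : Fin n) : Function.Involutive (fl i) := by
  intro x
  funext j
  by_cases h : j = i
  · subst h; rw [fl_apply_self, fl_apply_self, Bool.not_not]
  · rw [fl_apply_ne _ _ _ h, fl_apply_ne _ _ _ h]

lemma sum_fl (i : Fin n) (F : (Fin n → Bool) → ℝ) : ∑ x, F (fl i x) = ∑ x, F x :=
  Fintype.sum_bijective (fl i) (fl_invol i).bijective _ _ (fun _ => rfl)

lemma chi_fl (i : Fin n) (S : Finset (Fin n)) (x : Fin n → Bool) :
    chi S (fl i x) = (if i ∈ S then -1 else 1) * chi S x := by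
  by_cases h : i ∈ S
  · rw [if_pos h, chi, chi, ← Finset.mul_prod_erase S _ h, ← Finset.mul_prod_erase S _ h]
    have h1 : ∏ j ∈ S.erase i, r (fl i x j) = ∏ j ∈ S.erase i, r (x j) :=
      Finset.prod_congr rfl fun j hj => by
        rw [fl_apply_ne i j x (Finset.ne_of_mem_erase hj)]
    rw [h1, fl_apply_self, r_not]; ring
  · rw [if_neg h, one_mul, chi, chi]
    refine Finset.prod_congr rfl fun j hj => ?_
    rw [fl_apply_ne i j x (fun e => h (e ▸ hj))]

lemma coef_fl (f : (Fin n → Bool) → ℝ) (i : Fin n) (S : Finset (Fin n)) :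
    ∑ x, f (fl i x) * chi S x = (if i ∈ S then -1 else 1) * ∑ x, f x * chi S x := by
  have := sum_fl i (fun x => f x * chi S (fl i x))
  calc ∑ x, f (fl i x) * chi S x
      = ∑ x, f (fl i x) * chi S (fl i (fl i x)) := by
        refine Finset.sum_congr rfl fun x _ => ?_; rw [fl_invol i x]
    _ = ∑ x, f x * chi S (fl i x) := this
    _ = (if i ∈ S then -1 else 1) * ∑ x, f x * chi S x := by
        simp_rw [chi_fl, Finset.mul_sum]
        exact Finset.sum_congr rfl fun x _ => by ring

noncomputable def ng (x : Fin n → Bool) : Fin n → Bool := fun i => !(x i)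

lemma ng_invol : Function.Involutive (ng (n := n)) := fun x => by
  funext i; simp [ng]

lemma sum_ng (F : (Fin n → Bool) → ℝ) : ∑ x, F (ng x) = ∑ x, F x :=
  Fintype.sum_bijective ng ng_invol.bijective _ _ (fun _ => rfl)

lemma chi_ng (S : Finset (Fin n)) (x : Fin n → Bool) :
    chi S (ng x) = (-1) ^ S.card * chi S x := by
  rw [chi, chi]
  calc ∏ i ∈ S, r (ng x i) = ∏ i ∈ S, (-1) * r (x i) := by
        refine Finset.prod_congr rfl fun i _ => ?_
        rw [show ng x i = !(x i) from rfl, r_not]; ring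
    _ = (-1) ^ S.card * ∏ i ∈ S, r (x i) := by
        rw [Finset.prod_mul_distrib, Finset.prod_const]

lemma coef_odd_eq_zero (f : (Fin n → Bool) → ℝ) (hf : ∀ x, f (ng x) = f x)
    (S : Finset (Fin n)) (hS : ¬ Even S.card) :
    ∑ x, f x * chi S x = 0 := by
  have key : ∑ x, f x * chi S x = - ∑ x, f x * chi S x := by
    calc ∑ x, f x * chi S x = ∑ x, f (ng x) * chi S (ng x) := (sum_ng _).symm
      _ = ∑ x, f x * ((-1) ^ S.card * chi S x) := by
          refine Finset.sum_congr rfl fun x _ => ?_; rw [hf, chi_ng]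
      _ = - ∑ x, f x * chi S x := by
          rw [Odd.neg_one_pow (Nat.not_even_iff_odd.mp hS)]
          rw [← Finset.sum_neg_distrib]
          exact Finset.sum_congr rfl fun x _ => by ring
  linarith

lemma sum_sign (S : Finset (Fin n)) :
    ∑ i : Fin n, (if i ∈ S then (-1:ℝ) else 1) = (n:ℝ) - 2 * S.card := by
  have h : ∀ i : Fin n, (if i ∈ S then (-1:ℝ) else 1)
      = 1 - 2 * (if i ∈ S then (1:ℝ) else 0) := by intro i; split <;> ring
  simp_rw [h]
  rw [Finset.sum_sub_distrib, Finset.sum_const, ← Finset.mul_sum, Finset.sum_ite_mem]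
  simp

lemma Q_identity (f : (Fin n → Bool) → ℝ) :
    (2:ℝ)^n * ∑ i : Fin n, ∑ x, f x * f (fl i x)
      = ∑ S : Finset (Fin n), ((n:ℝ) - 2 * S.card) * (∑ x, f x * chi S x)^2 := by
  have h1 : ∀ i : Fin n, (2:ℝ)^n * ∑ x, f x * f (fl i x)
      = ∑ S : Finset (Fin n), (if i ∈ S then (-1:ℝ) else 1) * (∑ x, f x * chi S x)^2 := by
    intro i
    rw [← parseval f (fun x => f (fl i x))]
    refine Finset.sum_congr rfl fun S _ => ?_
    rw [coef_fl]
    ring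
  rw [Finset.mul_sum]
  simp_rw [h1]
  rw [Finset.sum_comm]
  refine Finset.sum_congr rfl fun S _ => ?_
  rw [← Finset.sum_mul, sum_sign]

noncomputable def t (w : Fin n → ℝ) (x : Fin n → Bool) : ℝ := ∑ i, w i * r (x i)

noncomputable def f (w : Fin n → ℝ) (x : Fin n → Bool) : ℝ := |t w x|

lemma t_fl (w : Fin n → ℝ) (i : Fin n) (x : Fin n → Bool) :
    t w (fl i x) = t w x - 2 * w i * r (x i) := by
  have : t w x - t w (fl i x) = 2 * w i * r (x i) := by
    rw [t, t, ← Finset.sum_sub_distrib]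
    rw [Finset.sum_eq_single i]
    · rw [fl_apply_self, r_not]; ring
    · intro j _ hj; rw [fl_apply_ne i j x hj]; ring
    · intro h; exact absurd (Finset.mem_univ i) h
  linarith

lemma sum_t_fl (w : Fin n → ℝ) (x : Fin n → Bool) :
    ∑ i, t w (fl i x) = ((n:ℝ) - 2) * t w x := by
  simp_rw [t_fl]
  rw [Finset.sum_sub_distrib, Finset.sum_const]
  have : ∑ i, 2 * w i * r (x i) = 2 * t w x := by
    rw [t, Finset.mul_sum]; exact Finset.sum_congr rfl fun i _ => by ring
  rw [this]
  simp
  ring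

lemma key_pointwise (w : Fin n → ℝ) (x : Fin n → Bool) :
    ((n:ℝ) - 2) * f w x ≤ ∑ i, f w (fl i x) := by
  calc ((n:ℝ) - 2) * f w x ≤ |((n:ℝ) - 2) * t w x| := by
        rw [abs_mul, f]; exact mul_le_mul_of_nonneg_right (le_abs_self _) (abs_nonneg _)
    _ = |∑ i, t w (fl i x)| := by rw [sum_t_fl]
    _ ≤ ∑ i, |t w (fl i x)| := Finset.abs_sum_le_sum_abs _ _
    _ = ∑ i, f w (fl i x) := rfl

lemma f_ng (w : Fin n → ℝ) (x : Fin n → Bool) : f w (ng x) = f w x := by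
  have : t w (ng x) = - t w x := by
    rw [t, t, ← Finset.sum_neg_distrib]
    refine Finset.sum_congr rfl fun i _ => ?_
    rw [show ng x i = !(x i) from rfl, r_not]; ring
  rw [f, f, this, abs_neg]

lemma sum_rr (i j : Fin n) :
    ∑ x : Fin n → Bool, r (x i) * r (x j) = if i = j then (2:ℝ)^n else 0 := by
  by_cases h : i = j
  · subst h
    rw [if_pos rfl]
    have : ∀ x : Fin n → Bool, r (x i) * r (x i) = 1 := fun x => r_mul_self _
    simp_rw [this]
    rw [Finset.sum_const]
    simp [Fintype.card_fun]
  · rw [if_neg h]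
    have h2 := sum_fl j (fun x => r (x i) * r (x j))
    have h3 : ∀ x : Fin n → Bool, r (fl j x i) * r (fl j x j)
        = - (r (x i) * r (x j)) := by
      intro x
      rw [fl_apply_ne j i x h, fl_apply_self, r_not]; ring
    rw [Finset.sum_congr rfl (fun x _ => h3 x)] at h2
    rw [Finset.sum_neg_distrib] at h2
    linarith

lemma sum_t_sq (w : Fin n → ℝ) (hw : ∑ i, (w i) ^ 2 = 1) :
    ∑ x : Fin n → Bool, (t w x) ^ 2 = 2 ^ n := by
  have expand : ∀ x, (t w x) ^ 2 = ∑ i, ∑ j, (w i * w j) * (r (x i) * r (x j)) := by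
    intro x
    rw [t, sq, Finset.sum_mul_sum]
    exact Finset.sum_congr rfl fun i _ => Finset.sum_congr rfl fun j _ => by ring
  simp_rw [expand]
  rw [Finset.sum_comm]
  have : ∀ i : Fin n, ∑ x : Fin n → Bool, ∑ j, (w i * w j) * (r (x i) * r (x j))
      = 2^n * (w i)^2 := by
    intro i
    rw [Finset.sum_comm]
    have : ∀ j : Fin n, ∑ x : Fin n → Bool, (w i * w j) * (r (x i) * r (x j))
        = (w i * w j) * (if i = j then (2:ℝ)^n else 0) := by
      intro j; rw [← Finset.mul_sum, sum_rr]
    simp_rw [this]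
    rw [Finset.sum_eq_single i]
    · simp; ring
    · intro j _ hj; rw [if_neg (Ne.symm hj), mul_zero]
    · intro h; exact absurd (Finset.mem_univ i) h
  simp_rw [this]
  rw [← Finset.mul_sum, hw, mul_one]

end KhinAux

/-- Khintchine inequality with optimal constant: for any unit vector `w` in `ℝⁿ`,
the expectation over uniform `x ∈ {-1,1}ⁿ` of `|w · x|` is at least `1/√2`. -/
theorem khintchine_optimal (n : ℕ) (w : Fin n → ℝ) (hw : ∑ i, (w i) ^ 2 = 1) :
    (1 : ℝ) / Real.sqrt 2 ≤
      (∑ x : Fin n → Bool, |∑ i, w i * (if x i then (1 : ℝ) else -1)|) / 2 ^ n := by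
  classical
  have hgoal : (∑ x : Fin n → Bool, |∑ i, w i * (if x i then (1 : ℝ) else -1)|)
      = ∑ x, KhinAux.f w x := rfl
  rw [hgoal]
  set c : Finset (Fin n) → ℝ := fun S => ∑ x, KhinAux.f w x * KhinAux.chi S x with hc
  have hff : ∀ x, KhinAux.f w x * KhinAux.f w x = (KhinAux.t w x) ^ 2 := by
    intro x; rw [KhinAux.f, abs_mul_abs_self, sq]
  -- Parseval
  have hP : ∑ S : Finset (Fin n), c S ^ 2 = 2 ^ n * 2 ^ n := by
    have h := KhinAux.parseval (KhinAux.f w) (KhinAux.f w)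
    simp_rw [hff] at h
    rw [KhinAux.sum_t_sq w hw] at h
    calc ∑ S : Finset (Fin n), c S ^ 2
        = ∑ S : Finset (Fin n), (∑ x, KhinAux.f w x * KhinAux.chi S x)
            * (∑ y, KhinAux.f w y * KhinAux.chi S y) := by
          refine Finset.sum_congr rfl fun S _ => ?_; rw [hc, sq]
      _ = 2 ^ n * 2 ^ n := h
  -- key spectral inequality
  have hfnn : ∀ x, 0 ≤ KhinAux.f w x := fun x => abs_nonneg _
  have hKey : ((n:ℝ) - 2) * (2 ^ n * 2 ^ n)
      ≤ ∑ S : Finset (Fin n), ((n:ℝ) - 2 * S.card) * c S ^ 2 := by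
    rw [← KhinAux.Q_identity (KhinAux.f w)]
    have h1 : ((n:ℝ) - 2) * (2 ^ n)
        ≤ ∑ i : Fin n, ∑ x, KhinAux.f w x * KhinAux.f w (KhinAux.fl i x) := by
      rw [Finset.sum_comm]
      have h2 : ∀ x, ((n:ℝ) - 2) * (KhinAux.t w x)^2
          ≤ ∑ i, KhinAux.f w x * KhinAux.f w (KhinAux.fl i x) := by
        intro x
        have h3 := KhinAux.key_pointwise w x
        have h4 : KhinAux.f w x * (((n:ℝ) - 2) * KhinAux.f w x)
            ≤ KhinAux.f w x * ∑ i, KhinAux.f w (KhinAux.fl i x) :=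
          mul_le_mul_of_nonneg_left h3 (hfnn x)
        rw [Finset.mul_sum] at h4
        calc ((n:ℝ) - 2) * (KhinAux.t w x)^2
            = KhinAux.f w x * (((n:ℝ) - 2) * KhinAux.f w x) := by rw [← hff x]; ring
          _ ≤ _ := h4
      calc ((n:ℝ) - 2) * (2:ℝ) ^ n = ∑ x, ((n:ℝ) - 2) * (KhinAux.t w x)^2 := by
            rw [← Finset.mul_sum, KhinAux.sum_t_sq w hw]
        _ ≤ _ := Finset.sum_le_sum fun x _ => h2 x
    calc ((n:ℝ) - 2) * (2 ^ n * 2 ^ n)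
        = 2 ^ n * (((n:ℝ) - 2) * 2 ^ n) := by ring
      _ ≤ 2 ^ n * ∑ i : Fin n, ∑ x, KhinAux.f w x * KhinAux.f w (KhinAux.fl i x) := by
          apply mul_le_mul_of_nonneg_left h1 (by positivity)
  -- rearrange: ∑_S (2 - 2 card S) c_S^2 ≥ 0
  have hRearr : 0 ≤ ∑ S : Finset (Fin n), ((2:ℝ) - 2 * S.card) * c S ^ 2 := by
    have expand : ∑ S : Finset (Fin n), ((2:ℝ) - 2 * S.card) * c S ^ 2
        = (∑ S : Finset (Fin n), ((n:ℝ) - 2 * S.card) * c S ^ 2)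
          - ((n:ℝ) - 2) * ∑ S : Finset (Fin n), c S ^ 2 := by
      rw [Finset.mul_sum, ← Finset.sum_sub_distrib]
      exact Finset.sum_congr rfl fun S _ => by ring
    rw [expand, hP]
    linarith
  -- bound non-empty terms
  have hempty : c ∅ = ∑ x, KhinAux.f w x := by
    rw [hc]
    refine Finset.sum_congr rfl fun x _ => ?_
    rw [KhinAux.chi, Finset.prod_empty, mul_one]
  have hterm : ∀ S : Finset (Fin n), S ≠ ∅ →
      ((2:ℝ) - 2 * S.card) * c S ^ 2 ≤ -2 * c S ^ 2 := by
    intro S hS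
    rcases Nat.lt_or_ge S.card 2 with h2 | h2
    · have hcard : S.card = 1 := by
        have := Finset.card_pos.mpr (Finset.nonempty_of_ne_empty hS)
        omega
      have : c S = 0 := by
        rw [hc]
        exact KhinAux.coef_odd_eq_zero (KhinAux.f w) (KhinAux.f_ng w) S
          (by rw [hcard]; decide)
      rw [this]; norm_num
    · have : ((2:ℝ) - 2 * S.card) ≤ -2 := by
        have : (2:ℝ) ≤ (S.card : ℝ) := by exact_mod_cast h2
        linarith
      nlinarith [sq_nonneg (c S)]
  -- combine
  have hsplit : ∑ S : Finset (Fin n), ((2:ℝ) - 2 * S.card) * c S ^ 2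
      = ((2:ℝ) - 2 * (∅ : Finset (Fin n)).card) * c ∅ ^ 2
        + ∑ S ∈ (Finset.univ : Finset (Finset (Fin n))).erase ∅,
            ((2:ℝ) - 2 * S.card) * c S ^ 2 := by
    rw [← Finset.add_sum_erase _ _ (Finset.mem_univ ∅)]
  have hsplitP : ∑ S : Finset (Fin n), c S ^ 2
      = c ∅ ^ 2 + ∑ S ∈ (Finset.univ : Finset (Finset (Fin n))).erase ∅, c S ^ 2 := by
    rw [← Finset.add_sum_erase _ _ (Finset.mem_univ ∅)]
  have hbound : ∑ S ∈ (Finset.univ : Finset (Finset (Fin n))).erase ∅,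
      ((2:ℝ) - 2 * S.card) * c S ^ 2
      ≤ ∑ S ∈ (Finset.univ : Finset (Finset (Fin n))).erase ∅, -2 * c S ^ 2 :=
    Finset.sum_le_sum fun S hS => hterm S (Finset.ne_of_mem_erase hS)
  have hrest : ∑ S ∈ (Finset.univ : Finset (Finset (Fin n))).erase ∅, c S ^ 2
      = (2:ℝ) ^ n * 2 ^ n - c ∅ ^ 2 := by
    rw [hsplitP] at hP; linarith
  have hfinal : c ∅ ^ 2 ≥ 2 ^ n * 2 ^ n / 2 := by
    have h1 : ∑ S ∈ (Finset.univ : Finset (Finset (Fin n))).erase ∅, -2 * c S ^ 2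
        = -2 * ((2:ℝ) ^ n * 2 ^ n - c ∅ ^ 2) := by
      rw [← Finset.mul_sum, hrest]
    have hcard0 : ((∅ : Finset (Fin n)).card : ℝ) = 0 := by simp
    rw [hsplit, hcard0] at hRearr
    rw [h1] at hbound
    nlinarith
  -- finish
  have hA : (0:ℝ) ≤ ∑ x, KhinAux.f w x := Finset.sum_nonneg fun x _ => hfnn x
  rw [← hempty] at hA
  rw [div_le_div_iff₀ (by positivity) (by positivity)]
  rw [← hempty]
  have hs2 : Real.sqrt 2 * Real.sqrt 2 = 2 := Real.mul_self_sqrt (by norm_num)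
  have hs2p : (0:ℝ) < Real.sqrt 2 := Real.sqrt_pos.mpr (by norm_num)
  have hPpos : (0:ℝ) < 2 ^ n := by positivity
  generalize hPdef : (2:ℝ) ^ n = P at hfinal hPpos ⊢
  by_contra hcon
  push_neg at hcon
  have h1 : c ∅ * Real.sqrt 2 < P := by linarith
  have h2 : (c ∅ * Real.sqrt 2) * (c ∅ * Real.sqrt 2) < P * P :=
    mul_self_lt_mul_self (by positivity) h1
  have h3 : (c ∅ * Real.sqrt 2) * (c ∅ * Real.sqrt 2) = 2 * c ∅ ^ 2 := by
    calc (c ∅ * Real.sqrt 2) * (c ∅ * Real.sqrt 2)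
        = (Real.sqrt 2 * Real.sqrt 2) * (c ∅ * c ∅) := by ring
      _ = 2 * c ∅ ^ 2 := by rw [hs2, sq]
  rw [h3] at h2
  linarith
end

section
/- Let f(x) = sign(w·x) be a zero-threshold LTF where w ∈ R^n is a unit vector. Then W¹[f] = ∑_{i=1}^n f̂(i)² satisfies W¹[f] ≥ (E_x[|w·x|])². -/
open Finset

/-- Gotsman–Linial inequality: for a zero-threshold LTF `f(x) = sign(w·x)` with `w` a unit
vector, `W¹[f] = ∑ᵢ f̂(i)² ≥ (E_x |w·x|)²`. -/
theorem gotsman_linial (n : ℕ) (w : Fin n → ℝ) (hw : ∑ i, (w i) ^ 2 = 1) :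
    ((∑ x : Fin n → Bool, |∑ i, w i * (if x i then (1 : ℝ) else -1)|) / 2 ^ n) ^ 2 ≤
      ∑ i : Fin n,
        ((∑ x : Fin n → Bool,
            (if 0 ≤ ∑ j, w j * (if x j then (1 : ℝ) else -1) then (1 : ℝ) else -1) *
              (if x i then (1 : ℝ) else -1)) / 2 ^ n) ^ 2 := by
  set S : (Fin n → Bool) → ℝ := fun x => ∑ j, w j * (if x j then (1 : ℝ) else -1) with hS
  set g : Fin n → ℝ := fun i => ∑ x : Fin n → Bool,
      (if 0 ≤ S x then (1 : ℝ) else -1) * (if x i then (1 : ℝ) else -1) with hg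
  have key : (∑ x : Fin n → Bool, |S x|) = ∑ i : Fin n, w i * g i := by
    calc ∑ x : Fin n → Bool, |S x|
        = ∑ x : Fin n → Bool, (if 0 ≤ S x then (1 : ℝ) else -1) * S x := by
          refine Finset.sum_congr rfl fun x _ => ?_
          split_ifs with h
          · rw [one_mul, abs_of_nonneg h]
          · rw [neg_one_mul, abs_of_neg (not_le.mp h)]
      _ = ∑ x : Fin n → Bool, ∑ i : Fin n,
            w i * ((if 0 ≤ S x then (1 : ℝ) else -1) * (if x i then (1 : ℝ) else -1)) := by
          refine Finset.sum_congr rfl fun x _ => ?_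
          rw [hS, Finset.mul_sum]
          refine Finset.sum_congr rfl fun i _ => ?_
          ring
      _ = ∑ i : Fin n, w i * g i := by
          rw [Finset.sum_comm]
          refine Finset.sum_congr rfl fun i _ => ?_
          rw [hg, Finset.mul_sum]
  have h2 : (0:ℝ) < 2 ^ n := by positivity
  have lhs_eq : ((∑ x : Fin n → Bool, |S x|) / 2 ^ n) ^ 2
      = (∑ i : Fin n, w i * (g i / 2 ^ n)) ^ 2 := by
    rw [key, Finset.sum_div]
    congr 1
    exact Finset.sum_congr rfl fun i _ => (mul_div_assoc _ _ _)
  rw [lhs_eq]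
  calc (∑ i : Fin n, w i * (g i / 2 ^ n)) ^ 2
      ≤ (∑ i : Fin n, (w i) ^ 2) * ∑ i : Fin n, (g i / 2 ^ n) ^ 2 :=
        Finset.sum_mul_sq_le_sq_mul_sq Finset.univ w (fun i => g i / 2 ^ n)
    _ = ∑ i : Fin n, (g i / 2 ^ n) ^ 2 := by rw [hw, one_mul]
end

section
/- Every zero-threshold linear threshold function f(x) = sign(w·x) with w a unit vector satisfies W¹[f] = ∑_{i=1}^n f̂(i)² ≥ 1/2. -/
open Finset

namespace LTFAux

variable {n : ℕ}

/-- Walsh character, symmetric form. -/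
def chi (s x : Fin n → Bool) : ℝ := ∏ i, if s i && x i then -1 else 1

/-- Fourier coefficient (with normalization `2 ^ n`). -/
noncomputable def coef (g : (Fin n → Bool) → ℝ) (s : Fin n → Bool) : ℝ :=
  (∑ x, g x * chi s x) / 2 ^ n

lemma chi_comm (s x : Fin n → Bool) : chi s x = chi x s := by
  unfold chi
  exact Finset.prod_congr rfl fun i _ => by rw [Bool.and_comm]

lemma orth (x y : Fin n → Bool) :
    ∑ s : Fin n → Bool, chi s x * chi s y = if x = y then (2 : ℝ) ^ n else 0 := by
  classical
  have h1 : ∀ s : Fin n → Bool, chi s x * chi s y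
      = ∏ i, ((if s i && x i then (-1:ℝ) else 1) * (if s i && y i then (-1:ℝ) else 1)) := by
    intro s; unfold chi; rw [← Finset.prod_mul_distrib]
  simp_rw [h1]
  rw [← Fintype.prod_sum (fun i (b : Bool) =>
      (if b && x i then (-1:ℝ) else 1) * (if b && y i then (-1:ℝ) else 1))]
  have h2 : ∀ i : Fin n, (∑ b : Bool,
      (if b && x i then (-1:ℝ) else 1) * (if b && y i then (-1:ℝ) else 1))
      = if x i = y i then 2 else 0 := by
    intro i
    cases hx : x i <;> cases hy : y i <;> simp <;> norm_num
  simp_rw [h2]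
  by_cases hxy : x = y
  · subst hxy; simp
  · obtain ⟨i, hi⟩ : ∃ i, x i ≠ y i := by
      by_contra h; push_neg at h; exact hxy (funext h)
    rw [if_neg hxy]
    exact Finset.prod_eq_zero (Finset.mem_univ i) (by rw [if_neg hi])

lemma parseval' (g h : (Fin n → Bool) → ℝ) :
    ∑ s : Fin n → Bool, (∑ x, g x * chi s x) * (∑ x, h x * chi s x)
      = 2 ^ n * ∑ x, g x * h x := by
  classical
  have e1 : ∀ s : Fin n → Bool, (∑ x, g x * chi s x) * (∑ x, h x * chi s x)
      = ∑ x, ∑ y, g x * h y * (chi s x * chi s y) := by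
    intro s
    rw [Finset.sum_mul_sum]
    exact Finset.sum_congr rfl fun x _ => Finset.sum_congr rfl fun y _ => by ring
  simp_rw [e1]
  rw [Finset.sum_comm]
  have e2 : ∀ x : Fin n → Bool, ∑ s : Fin n → Bool, ∑ y, g x * h y * (chi s x * chi s y)
      = 2 ^ n * (g x * h x) := by
    intro x
    rw [Finset.sum_comm]
    have e3 : ∀ y : Fin n → Bool, ∑ s : Fin n → Bool, g x * h y * (chi s x * chi s y)
        = g x * h y * (if x = y then (2:ℝ) ^ n else 0) := by
      intro y; rw [← Finset.mul_sum, orth]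
    simp_rw [e3]
    have e4 : ∀ y : Fin n → Bool, g x * h y * (if x = y then (2:ℝ) ^ n else 0)
        = if x = y then g x * h y * (2:ℝ)^n else 0 := by
      intro y; split <;> ring
    simp_rw [e4]
    rw [Finset.sum_ite_eq]
    simp [mul_comm, mul_assoc, mul_left_comm]
  simp_rw [e2]
  rw [← Finset.mul_sum]

lemma parseval (g h : (Fin n → Bool) → ℝ) :
    ∑ s : Fin n → Bool, coef g s * coef h s = (∑ x, g x * h x) / 2 ^ n := by
  unfold coef
  have h2 : (2:ℝ) ^ n ≠ 0 := by positivity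
  simp_rw [div_mul_div_comm, ← Finset.sum_div]
  rw [parseval']
  field_simp

/-- flip coordinate `i` -/
def flp (i : Fin n) (x : Fin n → Bool) : Fin n → Bool := Function.update x i (!x i)

lemma flp_invol (i : Fin n) (x : Fin n → Bool) : flp i (flp i x) = x := by
  funext j
  by_cases hj : j = i
  · subst hj; simp [flp]
  · simp [flp, Function.update_apply, hj]

lemma sum_flp (i : Fin n) (φ : (Fin n → Bool) → ℝ) :
    ∑ x, φ (flp i x) = ∑ x, φ x :=
  Fintype.sum_bijective (flp i)
    (Function.Involutive.bijective (flp_invol i)) _ _ (fun _ => rfl)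

lemma chi_flp (s : Fin n → Bool) (i : Fin n) (x : Fin n → Bool) :
    chi s (flp i x) = (if s i then -1 else 1) * chi s x := by
  classical
  unfold chi
  rw [← Finset.mul_prod_erase Finset.univ _ (Finset.mem_univ i),
    ← Finset.mul_prod_erase Finset.univ (fun j => if s j && x j then (-1:ℝ) else 1)
      (Finset.mem_univ i), ← mul_assoc]
  congr 1
  · have hfi : flp i x i = !x i := by simp [flp]
    rw [hfi]
    cases hs : s i <;> cases hx : x i <;> norm_num
  · exact Finset.prod_congr rfl fun j hj => by
      have hfj : flp i x j = x j := by
        simp [flp, Function.update_apply, (Finset.mem_erase.mp hj).1]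
      rw [hfj]

lemma coef_flp (g : (Fin n → Bool) → ℝ) (i : Fin n) (s : Fin n → Bool) :
    coef (fun x => g (flp i x)) s = (if s i then -1 else 1) * coef g s := by
  unfold coef
  rw [← mul_div_assoc]
  congr 1
  have h := sum_flp i (fun x => g (flp i x) * chi s x)
  rw [← h]
  simp_rw [flp_invol, chi_flp]
  rw [Finset.mul_sum]
  exact Finset.sum_congr rfl fun x _ => by ring

/-- global negation -/
def ngx (x : Fin n → Bool) : Fin n → Bool := fun j => !x j

lemma ngx_invol (x : Fin n → Bool) : ngx (ngx x) = x := by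
  funext j; simp [ngx]

lemma sum_ngx (φ : (Fin n → Bool) → ℝ) : ∑ x, φ (ngx x) = ∑ x, φ x :=
  Fintype.sum_bijective ngx (Function.Involutive.bijective ngx_invol) _ _ (fun _ => rfl)

/-- number of coordinates in the support of `s` -/
def Ks (s : Fin n → Bool) : ℕ := (Finset.univ.filter fun i => s i = true).card

lemma chi_ngx (s x : Fin n → Bool) :
    chi s (ngx x) = (-1 : ℝ) ^ Ks s * chi s x := by
  classical
  unfold chi
  have h1 : ∀ i : Fin n, (if s i && (ngx x) i then (-1:ℝ) else 1)
      = (if s i then (-1:ℝ) else 1) * (if s i && x i then (-1:ℝ) else 1) := by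
    intro i
    cases hs : s i <;> cases hx : x i <;> simp [ngx, hs, hx] <;> norm_num
  simp_rw [h1]
  rw [Finset.prod_mul_distrib]
  congr 1
  rw [← Finset.prod_filter_mul_prod_filter_not Finset.univ (fun i => s i = true)]
  rw [Finset.prod_congr rfl (fun i hi => if_pos (Finset.mem_filter.mp hi).2),
    Finset.prod_congr rfl (g := fun _ => (1:ℝ))
      (fun i hi => if_neg (by simpa using (Finset.mem_filter.mp hi).2))]
  simp [Ks, Finset.prod_const]

lemma coef_eq_zero_of_odd (g : (Fin n → Bool) → ℝ) (hg : ∀ x, g (ngx x) = g x)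
    (s : Fin n → Bool) (hs : Odd (Ks s)) : coef g s = 0 := by
  unfold coef
  have key : ∑ x, g x * chi s x = - ∑ x, g x * chi s x := by
    conv_lhs => rw [← sum_ngx (fun x => g x * chi s x)]
    simp_rw [hg, chi_ngx, hs.neg_one_pow]
    rw [← Finset.sum_neg_distrib]
    exact Finset.sum_congr rfl fun x _ => by ring
  have h0 : ∑ x, g x * chi s x = 0 := by linarith
  rw [h0, zero_div]

lemma Ks_eq_zero (s : Fin n → Bool) (hs : Ks s = 0) : s = fun _ => false := by
  funext i
  by_contra h
  have hi : s i = true := by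
    cases hsi : s i
    · exact absurd hsi h
    · rfl
  have hmem : i ∈ Finset.univ.filter fun i => s i = true := by simp [hi]
  rw [Finset.card_eq_zero.mp hs] at hmem
  exact absurd hmem (Finset.notMem_empty i)

end LTFAux

open LTFAux in
/-- Every zero-threshold LTF `f(x) = sign(w·x)` with `w` a unit vector has
`W¹[f] = ∑ᵢ f̂(i)² ≥ 1/2`. -/
theorem ltf_level_one_weight_ge_half (n : ℕ) (w : Fin n → ℝ) (hw : ∑ i, (w i) ^ 2 = 1) :
    (1 : ℝ) / 2 ≤
      ∑ i : Fin n,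
        ((∑ x : Fin n → Bool,
            (if 0 ≤ ∑ j, w j * (if x j then (1 : ℝ) else -1) then (1 : ℝ) else -1) *
              (if x i then (1 : ℝ) else -1)) / 2 ^ n) ^ 2 := by
  classical
  set S : (Fin n → Bool) → ℝ := fun x => ∑ j, w j * (if x j then (1 : ℝ) else -1) with hS
  set f : (Fin n → Bool) → ℝ := fun x => if 0 ≤ S x then (1:ℝ) else -1 with hf
  set g : (Fin n → Bool) → ℝ := fun x => |S x| with hg
  set F : Fin n → ℝ := fun i =>
    (∑ x : Fin n → Bool, f x * (if x i then (1 : ℝ) else -1)) / 2 ^ n with hF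
  have h2n : (2:ℝ) ^ n ≠ 0 := by positivity
  have h2npos : (0:ℝ) < 2 ^ n := by positivity
  set z : Fin n → Bool := fun _ => false with hz
  -- basic sign facts
  have hsgn : ∀ (i : Fin n) (x : Fin n → Bool),
      (if x i then (1:ℝ) else -1) = - chi (fun j => decide (j = i)) x := by
    intro i x
    unfold chi
    rw [Finset.prod_eq_single i (fun j _ hj => by simp [hj])
      (fun h => absurd (Finset.mem_univ i) h)]
    cases hx : x i <;> simp [hx]
  have hfS : ∀ x, f x * S x = g x := by
    intro x
    simp only [hf, hg]
    by_cases hx : 0 ≤ S x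
    · rw [if_pos hx, one_mul, abs_of_nonneg hx]
    · rw [if_neg hx, abs_of_neg (lt_of_not_ge hx)]; ring
  -- mean of g
  set m : ℝ := (∑ x, g x) / 2 ^ n with hm
  have hmF : m = ∑ i, w i * F i := by
    rw [hm]
    have e : ∑ x, g x = ∑ i, w i * ∑ x, f x * (if x i then (1:ℝ) else -1) := by
      simp_rw [← hfS, hS, Finset.mul_sum]
      rw [Finset.sum_comm]
      exact Finset.sum_congr rfl fun i _ => Finset.sum_congr rfl fun x _ => by ring
    rw [e, Finset.sum_div]
    exact Finset.sum_congr rfl fun i _ => by rw [hF]; ring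
  -- E S^2 = 1
  have hES2 : ∑ x, S x ^ 2 = 2 ^ n := by
    have expand : ∀ x, S x ^ 2 = ∑ i, ∑ j, w i * w j *
        (chi (fun k => decide (k = i)) x * chi (fun k => decide (k = j)) x) := by
      intro x
      rw [hS, sq, Finset.sum_mul_sum]
      refine Finset.sum_congr rfl fun i _ => Finset.sum_congr rfl fun j _ => ?_
      rw [hsgn i x, hsgn j x]; ring
    simp_rw [expand]
    rw [Finset.sum_comm]
    have e5 : ∀ i : Fin n, ∑ x : Fin n → Bool, ∑ j, w i * w j *
        (chi (fun k => decide (k = i)) x * chi (fun k => decide (k = j)) x)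
        = w i ^ 2 * 2 ^ n := by
      intro i
      rw [Finset.sum_comm]
      have inner : ∀ j : Fin n, ∑ x : Fin n → Bool, w i * w j *
          (chi (fun k => decide (k = i)) x * chi (fun k => decide (k = j)) x)
          = if i = j then w i * w j * (2:ℝ)^n else 0 := by
        intro j
        rw [← Finset.mul_sum]
        have ec : ∀ x : Fin n → Bool,
            chi (fun k => decide (k = i)) x * chi (fun k => decide (k = j)) x
            = chi x (fun k => decide (k = i)) * chi x (fun k => decide (k = j)) := by
          intro x
          rw [chi_comm (fun k => decide (k = i)) x, chi_comm (fun k => decide (k = j)) x]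
        simp_rw [ec]
        rw [orth]
        by_cases hij : i = j
        · subst hij; simp
        · rw [if_neg hij, if_neg, mul_zero]
          intro h
          have h2 := congrFun h j
          simp at h2
          exact hij h2.symm
      simp_rw [inner]
      rw [Finset.sum_ite_eq]
      simp [sq]
    simp_rw [e5]
    rw [← Finset.sum_mul, hw, one_mul]
  -- Parseval for g
  have hgg : ∀ x, g x * g x = S x ^ 2 := by
    intro x; rw [hg]; simp [sq_abs, sq]
  have hPg : ∑ s : Fin n → Bool, coef g s ^ 2 = 1 := by
    have := parseval g g
    simp_rw [hgg, hES2] at this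
    simp_rw [← sq] at this
    rw [this, div_self h2n]
  -- coef at zero is the mean
  have hchiz : ∀ x, chi z x = 1 := by
    intro x; unfold chi; rw [hz]; simp
  have hcz : coef g z = m := by
    unfold coef
    simp_rw [hchiz, mul_one]
    exact hm.symm
  -- g is even
  have hgev : ∀ x, g (ngx x) = g x := by
    intro x
    have hSn : S (ngx x) = - S x := by
      rw [hS, ← Finset.sum_neg_distrib]
      refine Finset.sum_congr rfl fun j _ => ?_
      cases hxj : x j <;> simp [ngx, hxj]
    rw [hg]
    simp only
    rw [hSn, abs_neg]
  -- Dirichlet form bound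
  have hflipS : ∀ (i : Fin n) x, S (flp i x) = S x - 2 * w i * (if x i then 1 else -1) := by
    intro i x
    rw [hS]
    simp only
    have e : ∀ j, w j * (if flp i x j then (1:ℝ) else -1)
        = w j * (if x j then (1:ℝ) else -1)
          - (if j = i then 2 * w i * (if x i then (1:ℝ) else -1) else 0) := by
      intro j
      by_cases hj : j = i
      · subst hj
        have : flp j x j = !x j := by simp [flp]
        rw [this, if_pos rfl]
        cases hxj : x j <;> simp <;> ring
      · have : flp i x j = x j := by simp [flp, Function.update_apply, hj]
        rw [this, if_neg hj, sub_zero]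
    simp_rw [e]
    rw [Finset.sum_sub_distrib, Finset.sum_ite_eq' Finset.univ i
      (fun _ => 2 * w i * (if x i then (1:ℝ) else -1))]
    simp
  have hdptw : ∀ (i : Fin n) x, ((g x - g (flp i x)) / 2) ^ 2 ≤ w i ^ 2 := by
    intro i x
    have habs : |g x - g (flp i x)| ≤ 2 * |w i| := by
      have h1 : |g x - g (flp i x)| ≤ |S x - S (flp i x)| := by
        simpa only [hg] using abs_abs_sub_abs_le_abs_sub (S x) (S (flp i x))
      have h2 : |S x - S (flp i x)| = 2 * |w i| := by
        rw [hflipS]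
        have : S x - (S x - 2 * w i * (if x i then (1:ℝ) else -1))
            = 2 * w i * (if x i then (1:ℝ) else -1) := by ring
        rw [this, abs_mul, abs_mul]
        cases hxi : x i <;> simp [abs_of_nonneg]
      rw [h2] at h1; exact h1
    have h3 : |(g x - g (flp i x)) / 2| ≤ |w i| := by
      rw [abs_div]
      rw [abs_of_nonneg (by norm_num : (0:ℝ) ≤ 2)]
      linarith
    calc ((g x - g (flp i x)) / 2) ^ 2 = |(g x - g (flp i x)) / 2| ^ 2 := (sq_abs _).symm
      _ ≤ |w i| ^ 2 := by
        apply pow_le_pow_left₀ (abs_nonneg _) h3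
      _ = w i ^ 2 := sq_abs _
  have hcoefd : ∀ (i : Fin n) (s : Fin n → Bool),
      coef (fun x => (g x - g (flp i x)) / 2) s = if s i then coef g s else 0 := by
    intro i s
    have hflip := coef_flp g i s
    unfold coef at hflip ⊢
    have e1 : ∀ x, ((g x - g (flp i x)) / 2) * chi s x
        = (g x * chi s x) / 2 - (g (flp i x) * chi s x) / 2 := fun x => by ring
    simp_rw [e1]
    rw [Finset.sum_sub_distrib, ← Finset.sum_div, ← Finset.sum_div]
    have e2 : (((∑ x, g x * chi s x) / 2 - (∑ x, g (flp i x) * chi s x) / 2)) / 2 ^ n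
        = ((∑ x, g x * chi s x) / 2 ^ n - (∑ x, g (flp i x) * chi s x) / 2 ^ n) / 2 := by
      ring
    rw [e2, hflip]
    split <;> ring
  have hdir1 : ∀ i : Fin n,
      ∑ s : Fin n → Bool, (if s i then coef g s ^ 2 else 0) ≤ w i ^ 2 := by
    intro i
    have hp := parseval (fun x => (g x - g (flp i x)) / 2) (fun x => (g x - g (flp i x)) / 2)
    have e1 : ∀ s : Fin n → Bool,
        coef (fun x => (g x - g (flp i x)) / 2) s * coef (fun x => (g x - g (flp i x)) / 2) s
        = if s i then coef g s ^ 2 else 0 := by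
      intro s; rw [hcoefd]; split <;> simp [sq]
    simp_rw [e1] at hp
    rw [hp]
    rw [div_le_iff₀ h2npos]
    have : ∑ x : Fin n → Bool, ((g x - g (flp i x)) / 2) * ((g x - g (flp i x)) / 2)
        ≤ ∑ x : Fin n → Bool, w i ^ 2 := by
      refine Finset.sum_le_sum fun x _ => ?_
      rw [← sq]
      exact hdptw i x
    refine le_trans this ?_
    rw [Finset.sum_const, nsmul_eq_mul]
    have hc : (Fintype.card (Fin n → Bool) : ℝ) = 2 ^ n := by
      simp [Fintype.card_fun]
    simp only [Finset.card_univ]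
    rw [hc]
    ring_nf
    exact le_refl _
  have hDir : ∑ s : Fin n → Bool, (Ks s : ℝ) * coef g s ^ 2 ≤ 1 := by
    have swap : ∑ s : Fin n → Bool, (Ks s : ℝ) * coef g s ^ 2
        = ∑ i : Fin n, ∑ s : Fin n → Bool, (if s i then coef g s ^ 2 else 0) := by
      rw [Finset.sum_comm]
      refine Finset.sum_congr rfl fun s _ => ?_
      rw [← Finset.sum_filter, Finset.sum_const, nsmul_eq_mul]
      rfl
    rw [swap, ← hw]
    exact Finset.sum_le_sum fun i _ => hdir1 i
  -- level-one coefficients vanish; per-s spectral bound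
  have hkey : ∀ s ∈ Finset.univ.erase z, 2 * coef g s ^ 2 ≤ (Ks s : ℝ) * coef g s ^ 2 := by
    intro s hs
    have hsz : s ≠ z := (Finset.mem_erase.mp hs).1
    rcases Nat.lt_or_ge (Ks s) 2 with hK | hK
    · interval_cases h : Ks s
      · exact absurd (Ks_eq_zero s h) hsz
      · have hodd : Odd (Ks s) := by rw [h]; exact odd_one
        rw [coef_eq_zero_of_odd g hgev s hodd]
        norm_num
    · have h2K : (2:ℝ) ≤ (Ks s : ℝ) := by exact_mod_cast hK
      exact mul_le_mul_of_nonneg_right h2K (sq_nonneg _)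
  -- assemble: m^2 ≥ 1/2
  have hsplit : (1:ℝ) = m ^ 2 + ∑ s ∈ Finset.univ.erase z, coef g s ^ 2 := by
    have h := Finset.add_sum_erase Finset.univ (fun s => coef g s ^ 2) (Finset.mem_univ z)
    rw [← hcz, ← hPg]
    exact h.symm
  have hA : ∑ s ∈ Finset.univ.erase z, coef g s ^ 2 ≤ 1 / 2 := by
    have h1 : 2 * ∑ s ∈ Finset.univ.erase z, coef g s ^ 2
        ≤ ∑ s ∈ Finset.univ.erase z, (Ks s : ℝ) * coef g s ^ 2 := by
      rw [Finset.mul_sum]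
      exact Finset.sum_le_sum hkey
    have h2 : ∑ s ∈ Finset.univ.erase z, (Ks s : ℝ) * coef g s ^ 2
        ≤ ∑ s : Fin n → Bool, (Ks s : ℝ) * coef g s ^ 2 := by
      refine Finset.sum_le_sum_of_subset_of_nonneg (Finset.subset_univ _) ?_
      intro s _ _
      positivity
    linarith
  have hm2 : 1 / 2 ≤ m ^ 2 := by linarith
  -- Cauchy-Schwarz
  have hCS : m ^ 2 ≤ ∑ i, F i ^ 2 := by
    rw [hmF]
    calc (∑ i, w i * F i) ^ 2 ≤ (∑ i, w i ^ 2) * ∑ i, F i ^ 2 :=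
          Finset.sum_mul_sq_le_sq_mul_sq _ _ _
      _ = ∑ i, F i ^ 2 := by rw [hw, one_mul]
  linarith
end

section
/- Let f : {-1,1}^n → {-1,1} be an LTF f(x) = sign(∑ w_i x_i − w_0) with |w_1| ≥ |w_i| for all i. Then f̂(1) ≥ f̂(i) in absolute value (i.e. Inf_1(f) ≥ Inf_i(f)) for all i ∈ [n], and moreover w_i · f̂(i) ≥ 0 for all i. -/
open Finset

/-- sign of a real: 1 if nonneg, -1 otherwise -/
noncomputable def sg (t : ℝ) : ℝ := if 0 ≤ t then 1 else -1

/-- ±1 encoding of a Bool -/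
def ch (b : Bool) : ℝ := if b then 1 else -1

noncomputable def lf {ι : Type*} [Fintype ι] [DecidableEq ι] (w : ι → ℝ) (w0 : ℝ) (x : ι → Bool) : ℝ :=
  sg ((∑ j, w j * ch (x j)) - w0)

noncomputable def Sc {ι : Type*} [Fintype ι] [DecidableEq ι] (w : ι → ℝ) (w0 : ℝ) (i : ι) : ℝ :=
  ∑ x : ι → Bool, lf w w0 x * ch (x i)

lemma R0 (T v : ℝ) : 0 ≤ sg v * ∑ b : Bool, sg (T + v * ch b) * ch b := by
  simp only [Fintype.sum_bool, sg, ch]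
  norm_num
  split_ifs <;> norm_num <;> linarith

lemma R2 (T u v : ℝ) (h : |v| ≤ |u|) :
    0 ≤ ∑ a : Bool, ∑ b : Bool,
      sg (T + u * ch a + v * ch b) * (sg u * ch a - sg v * ch b) := by
  rcases abs_cases u with ⟨hu, hu'⟩ | ⟨hu, hu'⟩ <;>
    rcases abs_cases v with ⟨hv, hv'⟩ | ⟨hv, hv'⟩ <;>
    rw [hu, hv] at h <;>
    simp only [Fintype.sum_bool, sg, ch] <;>
    norm_num <;>
    split_ifs <;> norm_num <;> linarith

lemma sum_upd {ι : Type*} [Fintype ι] [DecidableEq ι] (g : (ι → Bool) → ℝ) (i : ι) :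
    ∑ b : Bool, ∑ x : ι → Bool, g (Function.update x i b) = 2 * ∑ x : ι → Bool, g x := by
  have h2 : ∑ x : ι → Bool, g (Function.update x i (!x i)) = ∑ x : ι → Bool, g x := by
    have hinv : Function.Involutive (fun x : ι → Bool => Function.update x i (!x i)) := by
      intro x
      funext j
      rcases eq_or_ne j i with rfl | hj
      · simp [Function.update_apply]
      · simp [Function.update_apply, hj]
    exact hinv.bijective.sum_comp g
  rw [Fintype.sum_bool, ← Finset.sum_add_distrib]
  have h1 : ∀ x : ι → Bool,
      g (Function.update x i true) + g (Function.update x i false)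
        = g x + g (Function.update x i (!x i)) := by
    intro x
    cases hxi : x i with
    | true =>
        have : Function.update x i true = x := by rw [← hxi]; exact Function.update_eq_self i x
        simp [hxi, this]
    | false =>
        have : Function.update x i false = x := by rw [← hxi]; exact Function.update_eq_self i x
        simp [hxi, this]
        ring
  rw [Finset.sum_congr rfl fun x _ => h1 x, Finset.sum_add_distrib, h2]
  ring

lemma sum_ch_update {ι : Type*} [Fintype ι] [DecidableEq ι] (w : ι → ℝ) (x : ι → Bool)
    (s : Finset ι) {i : ι} (hi : i ∈ s) (b : Bool) :
    ∑ j ∈ s, w j * ch (Function.update x i b j)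
      = (∑ j ∈ s.erase i, w j * ch (x j)) + w i * ch b := by
  rw [← Finset.sum_erase_add s _ hi]
  congr 1
  · exact Finset.sum_congr rfl fun j hj => by
      rw [Function.update_of_ne (Finset.ne_of_mem_erase hj)]
  · rw [Function.update_self]

lemma KA {ι : Type*} [Fintype ι] [DecidableEq ι] (w : ι → ℝ) (w0 : ℝ) (i : ι) :
    0 ≤ sg (w i) * Sc w w0 i := by
  have h2 : 2 * Sc w w0 i
      = ∑ x : ι → Bool, ∑ b : Bool,
          sg ((∑ j ∈ univ.erase i, w j * ch (x j)) - w0 + w i * ch b) * ch b := by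
    unfold Sc
    rw [← sum_upd (fun x => lf w w0 x * ch (x i)) i, Finset.sum_comm]
    refine Finset.sum_congr rfl fun x _ => Finset.sum_congr rfl fun b _ => ?_
    simp only [Function.update_self]
    unfold lf
    rw [sum_ch_update w x univ (mem_univ i) b]
    rw [show (∑ j ∈ univ.erase i, w j * ch (x j)) + w i * ch b - w0
        = (∑ j ∈ univ.erase i, w j * ch (x j)) - w0 + w i * ch b from by ring]
  have h3 : 0 ≤ sg (w i) * (2 * Sc w w0 i) := by
    rw [h2, Finset.mul_sum]
    exact Finset.sum_nonneg fun x _ => R0 _ _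
  nlinarith [h3]

lemma L2 {ι : Type*} [Fintype ι] [DecidableEq ι] (g : (ι → Bool) → ℝ) (i0 i : ι) :
    ∑ a : Bool, ∑ b : Bool, ∑ x : ι → Bool,
        g (Function.update (Function.update x i0 a) i b)
      = 4 * ∑ x : ι → Bool, g x := by
  have h1 : ∀ b : Bool,
      ∑ a : Bool, ∑ x : ι → Bool, g (Function.update (Function.update x i0 a) i b)
        = 2 * ∑ x : ι → Bool, g (Function.update x i b) :=
    fun b => sum_upd (fun y => g (Function.update y i b)) i0
  rw [Finset.sum_comm]
  calc ∑ b : Bool, ∑ a : Bool, ∑ x : ι → Bool,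
          g (Function.update (Function.update x i0 a) i b)
      = ∑ b : Bool, 2 * ∑ x : ι → Bool, g (Function.update x i b) :=
        Finset.sum_congr rfl fun b _ => h1 b
    _ = 2 * ∑ b : Bool, ∑ x : ι → Bool, g (Function.update x i b) := by
        rw [Finset.mul_sum]
    _ = 2 * (2 * ∑ x : ι → Bool, g x) := by rw [sum_upd g i]
    _ = 4 * ∑ x : ι → Bool, g x := by ring

lemma KB {ι : Type*} [Fintype ι] [DecidableEq ι] (w : ι → ℝ) (w0 : ℝ) {i0 i : ι}
    (hne : i ≠ i0) (h : |w i| ≤ |w i0|) :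
    sg (w i) * Sc w w0 i ≤ sg (w i0) * Sc w w0 i0 := by
  set g : (ι → Bool) → ℝ :=
    fun x => lf w w0 x * (sg (w i0) * ch (x i0) - sg (w i) * ch (x i)) with hg
  have hD : ∑ x : ι → Bool, g x = sg (w i0) * Sc w w0 i0 - sg (w i) * Sc w w0 i := by
    unfold Sc
    rw [Finset.mul_sum, Finset.mul_sum, ← Finset.sum_sub_distrib]
    exact Finset.sum_congr rfl fun x _ => by rw [hg]; ring
  have h4 := L2 g i0 i
  have hterm : ∀ x : ι → Bool,
      0 ≤ ∑ a : Bool, ∑ b : Bool, g (Function.update (Function.update x i0 a) i b) := by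
    intro x
    have hrw : ∀ a b : Bool,
        g (Function.update (Function.update x i0 a) i b)
          = sg (((∑ j ∈ (univ.erase i).erase i0, w j * ch (x j)) - w0)
                + w i0 * ch a + w i * ch b)
            * (sg (w i0) * ch a - sg (w i) * ch b) := by
      intro a b
      have e1 : Function.update (Function.update x i0 a) i b i0 = a := by
        rw [Function.update_of_ne (Ne.symm hne), Function.update_self]
      have e2 : Function.update (Function.update x i0 a) i b i = b := by
        rw [Function.update_self]
      rw [hg]
      simp only [e1, e2]
      unfold lf
      rw [sum_ch_update w _ univ (mem_univ i) b,
        sum_ch_update w x (univ.erase i) (Finset.mem_erase.2 ⟨Ne.symm hne, mem_univ i0⟩) a]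
      rw [show (∑ j ∈ (univ.erase i).erase i0, w j * ch (x j)) + w i0 * ch a + w i * ch b - w0
          = (∑ j ∈ (univ.erase i).erase i0, w j * ch (x j)) - w0 + w i0 * ch a + w i * ch b
          from by ring]
    calc (0:ℝ) ≤ ∑ a : Bool, ∑ b : Bool,
          sg (((∑ j ∈ (univ.erase i).erase i0, w j * ch (x j)) - w0)
                + w i0 * ch a + w i * ch b)
            * (sg (w i0) * ch a - sg (w i) * ch b) := R2 _ _ _ h
      _ = ∑ a : Bool, ∑ b : Bool, g (Function.update (Function.update x i0 a) i b) :=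
          Finset.sum_congr rfl fun a _ => Finset.sum_congr rfl fun b _ => (hrw a b).symm
  have hswap : ∑ a : Bool, ∑ b : Bool, ∑ x : ι → Bool,
        g (Function.update (Function.update x i0 a) i b)
      = ∑ x : ι → Bool, ∑ a : Bool, ∑ b : Bool,
        g (Function.update (Function.update x i0 a) i b) := by
    calc ∑ a : Bool, ∑ b : Bool, ∑ x : ι → Bool,
          g (Function.update (Function.update x i0 a) i b)
        = ∑ a : Bool, ∑ x : ι → Bool, ∑ b : Bool,
          g (Function.update (Function.update x i0 a) i b) :=
          Finset.sum_congr rfl fun a _ => Finset.sum_comm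
      _ = _ := Finset.sum_comm
  have hpos : 0 ≤ 4 * ∑ x : ι → Bool, g x := by
    rw [← h4, hswap]
    exact Finset.sum_nonneg fun x _ => hterm x
  rw [hD] at hpos
  linarith

lemma habs {ι : Type*} [Fintype ι] [DecidableEq ι] (w : ι → ℝ) (w0 : ℝ) (i : ι) :
    |Sc w w0 i| = sg (w i) * Sc w w0 i := by
  have := KA w w0 i
  unfold sg at this ⊢
  split_ifs at this ⊢ with hw
  · rw [one_mul] at this ⊢; exact abs_of_nonneg this
  · rw [neg_one_mul] at this ⊢
    rw [abs_of_nonpos (by linarith)]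

/-- For an LTF `f(x) = sign(∑ wᵢxᵢ − w₀)` whose first weight is largest in magnitude, the
first degree-1 Fourier coefficient is largest in magnitude, and each `wᵢ · f̂(i) ≥ 0`. -/
theorem ltf_first_coefficient_largest (n : ℕ) (hn : 0 < n) (w : Fin n → ℝ) (w0 : ℝ)
    (hmax : ∀ i, |w i| ≤ |w ⟨0, hn⟩|) :
    (∀ i : Fin n,
      |(∑ x : Fin n → Bool,
          (if 0 ≤ (∑ j, w j * (if x j then (1 : ℝ) else -1)) - w0 then (1 : ℝ) else -1) *
            (if x i then (1 : ℝ) else -1)) / 2 ^ n| ≤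
      |(∑ x : Fin n → Bool,
          (if 0 ≤ (∑ j, w j * (if x j then (1 : ℝ) else -1)) - w0 then (1 : ℝ) else -1) *
            (if x ⟨0, hn⟩ then (1 : ℝ) else -1)) / 2 ^ n|) ∧
    (∀ i : Fin n,
      0 ≤ w i *
        ((∑ x : Fin n → Bool,
          (if 0 ≤ (∑ j, w j * (if x j then (1 : ℝ) else -1)) - w0 then (1 : ℝ) else -1) *
            (if x i then (1 : ℝ) else -1)) / 2 ^ n)) := by
  show (∀ i : Fin n, |Sc w w0 i / 2 ^ n| ≤ |Sc w w0 ⟨0, hn⟩ / 2 ^ n|) ∧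
    (∀ i : Fin n, 0 ≤ w i * (Sc w w0 i / 2 ^ n))
  constructor
  · intro i
    rcases eq_or_ne i ⟨0, hn⟩ with rfl | hi
    · exact le_refl _
    · rw [abs_div, abs_div, abs_pow]
      have h2 : |(2:ℝ)| = 2 := abs_two
      rw [h2]
      have key : |Sc w w0 i| ≤ |Sc w w0 ⟨0, hn⟩| := by
        rw [habs, habs]
        exact KB w w0 hi (hmax i)
      gcongr
  · intro i
    have hKA := KA w w0 i
    have hwS : 0 ≤ w i * Sc w w0 i := by
      unfold sg at hKA
      split_ifs at hKA with hw
      · rw [one_mul] at hKA; exact mul_nonneg hw hKA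
      · rw [neg_one_mul] at hKA
        nlinarith
    rw [← mul_div_assoc]
    exact div_nonneg hwS (by positivity)
end

section
/- Let f : {-1,1}^n → {-1,1} be an LTF with 1 − |E[f]| = p. Then W¹[f] = ∑_{i=1}^n f̂(i)² ≥ p²/2. -/
open Finset

namespace OS24

noncomputable def ch (b : Bool) : ℝ := if b then 1 else -1

lemma ch_def (b : Bool) : (if b then (1:ℝ) else -1) = ch b := rfl
lemma ch_sq (b : Bool) : ch b * ch b = 1 := by cases b <;> simp [ch]
lemma ch_not (b : Bool) : ch (!b) = - ch b := by cases b <;> simp [ch]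
lemma ch_mul_ne {b c : Bool} (h : b ≠ c) : ch b * ch c = -1 := by
  cases b <;> cases c <;> simp_all [ch]
lemma abs_ch (b : Bool) : |ch b| = 1 := by cases b <;> simp [ch]

variable {n : ℕ}

noncomputable def chi (A : Finset (Fin n)) (x : Fin n → Bool) : ℝ := ∏ i ∈ A, ch (x i)

noncomputable def co (F : (Fin n → Bool) → ℝ) (A : Finset (Fin n)) : ℝ := ∑ x, F x * chi A x

def flipf (i : Fin n) (x : Fin n → Bool) : Fin n → Bool := Function.update x i (!(x i))

lemma flipf_invol (i : Fin n) : Function.Involutive (flipf i) := by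
  intro x; funext j
  by_cases hj : j = i
  · subst hj; simp [flipf]
  · simp [flipf, Function.update_of_ne hj]

def flipP (i : Fin n) : Equiv.Perm (Fin n → Bool) := (flipf_invol i).toPerm

lemma flipP_apply (i : Fin n) (x : Fin n → Bool) : flipP i x = flipf i x := rfl

lemma flipf_apply_self (i : Fin n) (x : Fin n → Bool) : flipf i x i = !(x i) := by
  simp [flipf]
lemma flipf_apply_ne (i : Fin n) {j : Fin n} (hj : j ≠ i) (x : Fin n → Bool) :
    flipf i x j = x j := by simp [flipf, Function.update_of_ne hj]

def flipa (x : Fin n → Bool) : Fin n → Bool := fun i => !(x i)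

lemma flipa_invol : Function.Involutive (flipa (n := n)) := by
  intro x; funext j; simp [flipa]

def flipaP : Equiv.Perm (Fin n → Bool) := (flipa_invol (n := n)).toPerm

lemma flipaP_apply (x : Fin n → Bool) : flipaP x = flipa x := rfl

/-- completeness -/
lemma chi_complete (x y : Fin n → Bool) :
    ∑ A : Finset (Fin n), chi A x * chi A y = if x = y then (2:ℝ)^n else 0 := by
  have h1 : ∀ A : Finset (Fin n), chi A x * chi A y = ∏ i ∈ A, (ch (x i) * ch (y i)) := by
    intro A; rw [chi, chi, ← Finset.prod_mul_distrib]
  have h2 : ∑ A : Finset (Fin n), chi A x * chi A y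
      = ∏ i : Fin n, (ch (x i) * ch (y i) + 1) := by
    rw [Finset.prod_add]
    rw [Finset.powerset_univ]
    apply Finset.sum_congr rfl
    intro A _
    rw [h1 A]; simp
  rw [h2]
  by_cases hxy : x = y
  · subst hxy
    simp only [if_pos rfl]
    have : ∀ i : Fin n, ch (x i) * ch (x i) + 1 = 2 := by intro i; rw [ch_sq]; norm_num
    rw [Finset.prod_congr rfl (fun i _ => this i)]
    simp
  · rw [if_neg hxy]
    have : ∃ i, x i ≠ y i := by
      by_contra h
      push_neg at h
      exact hxy (funext h)
    obtain ⟨i, hi⟩ := this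
    apply Finset.prod_eq_zero (Finset.mem_univ i)
    rw [ch_mul_ne hi]; norm_num

/-- expansion -/
lemma chi_expansion (F : (Fin n → Bool) → ℝ) (x : Fin n → Bool) :
    ∑ A : Finset (Fin n), co F A * chi A x = (2:ℝ)^n * F x := by
  simp only [co, Finset.sum_mul]
  rw [Finset.sum_comm]
  have : ∀ y, ∑ A : Finset (Fin n), F y * chi A y * chi A x
      = F y * (if y = x then (2:ℝ)^n else 0) := by
    intro y
    simp only [mul_assoc, ← Finset.mul_sum, chi_complete]
  rw [Finset.sum_congr rfl (fun y _ => this y)]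
  simp [Finset.sum_ite_eq', mul_comm]

/-- Parseval -/
lemma parseval (F G : (Fin n → Bool) → ℝ) :
    ∑ A : Finset (Fin n), co F A * co G A = (2:ℝ)^n * ∑ x, F x * G x := by
  have : ∀ A : Finset (Fin n), co F A * co G A = ∑ y, G y * (co F A * chi A y) := by
    intro A
    have hG : co G A = ∑ y, G y * chi A y := rfl
    rw [hG, Finset.mul_sum]
    apply Finset.sum_congr rfl
    intro y _; ring
  rw [Finset.sum_congr rfl (fun A _ => this A), Finset.sum_comm]
  have h2 : ∀ y, ∑ A : Finset (Fin n), G y * (co F A * chi A y) = G y * ((2:ℝ)^n * F y) := by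
    intro y
    rw [← Finset.mul_sum, chi_expansion]
  rw [Finset.sum_congr rfl (fun y _ => h2 y), Finset.mul_sum]
  apply Finset.sum_congr rfl
  intro y _; ring

lemma chi_flip (A : Finset (Fin n)) (i : Fin n) (x : Fin n → Bool) :
    chi A (flipf i x) = (if i ∈ A then -1 else 1) * chi A x := by
  by_cases hi : i ∈ A
  · rw [if_pos hi]
    rw [chi, chi, ← Finset.mul_prod_erase A _ hi, ← Finset.mul_prod_erase A (fun j => ch (x j)) hi]
    rw [flipf_apply_self, ch_not]
    have : ∀ j ∈ A.erase i, ch (flipf i x j) = ch (x j) := by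
      intro j hj
      rw [flipf_apply_ne i (Finset.ne_of_mem_erase hj) x]
    rw [Finset.prod_congr rfl this]
    ring
  · rw [if_neg hi, one_mul, chi, chi]
    apply Finset.prod_congr rfl
    intro j hj
    have : j ≠ i := fun h => hi (h ▸ hj)
    rw [flipf_apply_ne i this x]

/-- Sum over the cube is invariant under a coordinate flip. -/
lemma sum_flip (i : Fin n) (F : (Fin n → Bool) → ℝ) :
    ∑ x, F (flipf i x) = ∑ x, F x := Equiv.sum_comp (flipP i) F

lemma sum_flipa (F : (Fin n → Bool) → ℝ) :
    ∑ x, F (flipa x) = ∑ x, F x := Equiv.sum_comp flipaP F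

/-- Fourier coefficients of the discrete derivative. -/
lemma co_deriv (F : (Fin n → Bool) → ℝ) (i : Fin n) (A : Finset (Fin n)) :
    co (fun x => (F x - F (flipf i x)) / 2) A = if i ∈ A then co F A else 0 := by
  have h1 : ∑ x, F (flipf i x) * chi A x
      = (if i ∈ A then -1 else 1) * co F A := by
    have := sum_flip i (fun y => F y * chi A (flipf i y))
    have h2 : ∀ x, F (flipf i x) * chi A (flipf i (flipf i x)) = F (flipf i x) * chi A x := by
      intro x; rw [flipf_invol i x]
    calc ∑ x, F (flipf i x) * chi A x
        = ∑ x, F (flipf i x) * chi A (flipf i (flipf i x)) := by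
          exact (Finset.sum_congr rfl (fun x _ => h2 x)).symm
      _ = ∑ x, F x * chi A (flipf i x) := this
      _ = (if i ∈ A then -1 else 1) * co F A := by
          rw [co, Finset.mul_sum]
          apply Finset.sum_congr rfl
          intro x _
          rw [chi_flip]; ring
  have hco : co (fun x => (F x - F (flipf i x)) / 2) A
      = ∑ x, (F x - F (flipf i x)) / 2 * chi A x := rfl
  rw [hco]
  have : ∀ x, (F x - F (flipf i x)) / 2 * chi A x
      = (F x * chi A x - F (flipf i x) * chi A x) / 2 := by intro x; ring
  rw [Finset.sum_congr rfl (fun x _ => this x), ← Finset.sum_div, Finset.sum_sub_distrib, h1]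
  have hcoF : ∑ x, F x * chi A x = co F A := rfl
  rw [hcoF]
  by_cases hi : i ∈ A
  · rw [if_pos hi, if_pos hi]; ring
  · rw [if_neg hi, if_neg hi]; ring

noncomputable def S (w : Fin n → ℝ) (x : Fin n → Bool) : ℝ := ∑ i, w i * ch (x i)

lemma card_cube : (Fintype.card (Fin n → Bool) : ℝ) = (2:ℝ)^n := by
  rw [Fintype.card_fun]
  simp

lemma sum_ch_mul_ch (i j : Fin n) :
    ∑ x : Fin n → Bool, ch (x i) * ch (x j) = if i = j then (2:ℝ)^n else 0 := by
  by_cases hij : i = j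
  · subst hij
    rw [if_pos rfl, Finset.sum_congr rfl (fun x _ => ch_sq (x i))]
    rw [Finset.sum_const, Finset.card_univ, nsmul_eq_mul, mul_one, ← card_cube]
  · rw [if_neg hij]
    have h := sum_flip i (fun x => ch (x i) * ch (x j))
    have h2 : ∀ x : Fin n → Bool, ch (flipf i x i) * ch (flipf i x j)
        = - (ch (x i) * ch (x j)) := by
      intro x
      rw [flipf_apply_self, flipf_apply_ne i (fun hh => hij hh.symm) x, ch_not]
      ring
    rw [Finset.sum_congr rfl (fun x _ => h2 x), Finset.sum_neg_distrib] at h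
    linarith [h]

lemma sum_S_sq (w : Fin n → ℝ) :
    ∑ x, (S w x)^2 = (2:ℝ)^n * ∑ i, (w i)^2 := by
  have : ∀ x, (S w x)^2 = ∑ i, ∑ j, (w i * w j) * (ch (x i) * ch (x j)) := by
    intro x
    rw [S, sq, Finset.sum_mul_sum]
    apply Finset.sum_congr rfl; intro i _
    apply Finset.sum_congr rfl; intro j _
    ring
  rw [Finset.sum_congr rfl (fun x _ => this x), Finset.sum_comm]
  have h2 : ∀ i, ∑ x : Fin n → Bool, ∑ j, (w i * w j) * (ch (x i) * ch (x j))
      = (2:ℝ)^n * (w i)^2 := by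
    intro i
    rw [Finset.sum_comm]
    have h3 : ∀ j, ∑ x : Fin n → Bool, (w i * w j) * (ch (x i) * ch (x j))
        = (w i * w j) * (if i = j then (2:ℝ)^n else 0) := by
      intro j
      rw [← Finset.mul_sum, sum_ch_mul_ch]
    rw [Finset.sum_congr rfl (fun j _ => h3 j)]
    simp [Finset.sum_ite_eq, mul_ite]
    ring
  rw [Finset.sum_congr rfl (fun i _ => h2 i), ← Finset.mul_sum]

lemma S_flipa (w : Fin n → ℝ) (x : Fin n → Bool) : S w (flipa x) = - S w x := by
  rw [S, S, ← Finset.sum_neg_distrib]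
  apply Finset.sum_congr rfl
  intro i _
  rw [flipa, ch_not]
  ring

lemma co_abs_singleton (w : Fin n → ℝ) (i : Fin n) :
    co (fun x => |S w x|) {i} = 0 := by
  have h := sum_flipa (fun x => |S w x| * chi {i} x)
  have h2 : ∀ x : Fin n → Bool, |S w (flipa x)| * chi {i} (flipa x)
      = - (|S w x| * chi {i} x) := by
    intro x
    rw [S_flipa, abs_neg, chi, chi, Finset.prod_singleton, Finset.prod_singleton]
    have : ch (flipa x i) = - ch (x i) := ch_not (x i)
    rw [this]
    ring
  rw [Finset.sum_congr rfl (fun x _ => h2 x), Finset.sum_neg_distrib] at h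
  have : co (fun x => |S w x|) {i} = ∑ x, |S w x| * chi {i} x := rfl
  rw [this]
  linarith [h]

lemma S_flipf (w : Fin n → ℝ) (i : Fin n) (x : Fin n → Bool) :
    S w x - S w (flipf i x) = 2 * w i * ch (x i) := by
  rw [S, S, ← Finset.sum_sub_distrib]
  have h : ∀ j ∈ (Finset.univ : Finset (Fin n)),
      w j * ch (x j) - w j * ch (flipf i x j)
      = if j = i then 2 * w i * ch (x i) else 0 := by
    intro j _
    by_cases hj : j = i
    · subst hj
      rw [if_pos rfl, flipf_apply_self, ch_not]
      ring
    · rw [if_neg hj, flipf_apply_ne i hj x]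
      ring
  rw [Finset.sum_congr rfl h]
  simp

/-- Szarek's inequality (sharp L1 Khintchine), squared, unnormalized. -/
lemma szarek (w : Fin n → ℝ) :
    (2:ℝ)^n * (2:ℝ)^n * (∑ i, (w i)^2) / 2 ≤ (∑ x, |S w x|)^2 := by
  set N : ℝ := (2:ℝ)^n with hN
  set F : (Fin n → Bool) → ℝ := fun x => |S w x| with hF
  -- Parseval for F
  have hP : ∑ A : Finset (Fin n), (co F A)^2 = N * ∑ x, (F x)^2 := by
    have := parseval F F
    simpa [sq] using this
  -- ∑ F² = ∑ S² = N σ²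
  have hFS : ∑ x, (F x)^2 = N * ∑ i, (w i)^2 := by
    rw [← sum_S_sq w]
    apply Finset.sum_congr rfl
    intro x _
    simp [hF, sq_abs]
  -- derivative identities
  have hQi : ∀ i : Fin n, ∑ A : Finset (Fin n), (if i ∈ A then (1:ℝ) else 0) * (co F A)^2
      = N * ∑ x, ((F x - F (flipf i x))/2)^2 := by
    intro i
    have hpars := parseval (fun x => (F x - F (flipf i x))/2) (fun x => (F x - F (flipf i x))/2)
    have hL : ∑ A : Finset (Fin n), (if i ∈ A then (1:ℝ) else 0) * (co F A)^2
        = ∑ A : Finset (Fin n), co (fun x => (F x - F (flipf i x))/2) A *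
            co (fun x => (F x - F (flipf i x))/2) A := by
      apply Finset.sum_congr rfl
      intro A _
      rw [co_deriv F i A]
      by_cases hi : i ∈ A
      · rw [if_pos hi, if_pos hi]; ring
      · rw [if_neg hi, if_neg hi]; ring
    rw [hL, hpars, ← hN, Finset.mul_sum, Finset.mul_sum]
    apply Finset.sum_congr rfl
    intro x _; ring
  -- derivative bound
  have hDb : ∀ i : Fin n, ∑ x, ((F x - F (flipf i x))/2)^2 ≤ N * (w i)^2 := by
    intro i
    have hpt : ∀ x : Fin n → Bool, ((F x - F (flipf i x))/2)^2 ≤ (w i)^2 := by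
      intro x
      have h1 : |F x - F (flipf i x)| ≤ |S w x - S w (flipf i x)| := by
        simpa [hF] using abs_abs_sub_abs_le_abs_sub (S w x) (S w (flipf i x))
      rw [S_flipf] at h1
      have h2 : |2 * w i * ch (x i)| = 2 * |w i| := by
        rw [abs_mul, abs_ch, mul_one, abs_mul, abs_two]
      rw [h2] at h1
      have h3 : |(F x - F (flipf i x))/2| ≤ |w i| := by
        rw [abs_div]
        rw [abs_of_pos (by norm_num : (0:ℝ) < 2)]
        linarith
      calc ((F x - F (flipf i x))/2)^2 = |(F x - F (flipf i x))/2|^2 := (sq_abs _).symm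
        _ ≤ |w i|^2 := by
            apply pow_le_pow_left₀ (abs_nonneg _) h3
        _ = (w i)^2 := sq_abs _
    calc ∑ x, ((F x - F (flipf i x))/2)^2 ≤ ∑ x : Fin n → Bool, (w i)^2 :=
          Finset.sum_le_sum (fun x _ => hpt x)
      _ = N * (w i)^2 := by
          rw [Finset.sum_const, Finset.card_univ, nsmul_eq_mul, card_cube, ← hN]
  -- weighted sum identity
  have hQ : ∑ A : Finset (Fin n), (A.card : ℝ) * (co F A)^2 ≤ N * N * ∑ i, (w i)^2 := by
    have hswap : ∑ A : Finset (Fin n), (A.card : ℝ) * (co F A)^2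
        = ∑ i : Fin n, ∑ A : Finset (Fin n), (if i ∈ A then (1:ℝ) else 0) * (co F A)^2 := by
      rw [Finset.sum_comm]
      apply Finset.sum_congr rfl
      intro A _
      rw [← Finset.sum_mul]
      congr 1
      rw [Finset.sum_boole]
      simp
    rw [hswap]
    calc ∑ i : Fin n, ∑ A : Finset (Fin n), (if i ∈ A then (1:ℝ) else 0) * (co F A)^2
        = ∑ i : Fin n, N * ∑ x, ((F x - F (flipf i x))/2)^2 := by
          exact Finset.sum_congr rfl (fun i _ => hQi i)
      _ ≤ ∑ i : Fin n, N * (N * (w i)^2) := by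
          apply Finset.sum_le_sum
          intro i _
          have hNpos : (0:ℝ) < N := by positivity
          exact mul_le_mul_of_nonneg_left (hDb i) (le_of_lt hNpos)
      _ = N * N * ∑ i, (w i)^2 := by
          rw [← Finset.mul_sum, ← Finset.mul_sum]
          ring
  -- empty coefficient
  have hEmpty : co F ∅ = ∑ x, F x := by
    have : co F ∅ = ∑ x, F x * chi ∅ x := rfl
    rw [this]
    apply Finset.sum_congr rfl
    intro x _
    rw [chi, Finset.prod_empty, mul_one]
  -- key per-A bound
  have hKey : ∑ A : Finset (Fin n), (co F A)^2
      ≤ (co F ∅)^2 + (1/2) * ∑ A : Finset (Fin n), (A.card : ℝ) * (co F A)^2 := by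
    have hempty : (co F ∅)^2
        = ∑ A : Finset (Fin n), (if A = ∅ then (co F A)^2 else 0) := by
      rw [Finset.sum_ite_eq' Finset.univ ∅ (fun A => (co F A)^2)]
      simp
    rw [hempty, Finset.mul_sum, ← Finset.sum_add_distrib]
    apply Finset.sum_le_sum
    intro A _
    by_cases hA : A = ∅
    · subst hA
      simp
    · rw [if_neg hA]
      rw [zero_add]
      rcases Nat.lt_or_ge A.card 2 with hc | hc
      · interval_cases h : A.card
        · exact absurd (Finset.card_eq_zero.mp h) hA
        · obtain ⟨i, hi⟩ := Finset.card_eq_one.mp h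
          subst hi
          rw [co_abs_singleton w i]
          simp
      · have h2 : (1:ℝ) ≤ 1/2 * (A.card : ℝ) := by
          have : (2:ℝ) ≤ (A.card : ℝ) := by exact_mod_cast hc
          linarith
        calc (co F A)^2 = 1 * (co F A)^2 := (one_mul _).symm
          _ ≤ (1/2 * (A.card:ℝ)) * (co F A)^2 :=
              mul_le_mul_of_nonneg_right h2 (sq_nonneg _)
          _ = 1/2 * ((A.card:ℝ) * (co F A)^2) := by ring
  -- assemble
  have := hKey
  rw [hP, hFS, hEmpty] at this
  -- N * (N * σ²) ≤ (∑F)² + 1/2 * Q ≤ (∑F)² + 1/2 * N*N*σ²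
  have h2 : (1/2) * ∑ A : Finset (Fin n), (A.card : ℝ) * (co F A)^2
      ≤ (1/2) * (N * N * ∑ i, (w i)^2) := by linarith [hQ]
  nlinarith [this, h2]

lemma sum_abs_sub_ge (w : Fin n → ℝ) (θ : ℝ) :
    (∑ x, |S w x - θ|) ≥ ∑ x, |S w x| ∧ (∑ x, |S w x - θ|) ≥ (2:ℝ)^n * |θ| := by
  have hpair : ∑ x, |S w x - θ| = ∑ x, |S w x + θ| := by
    have h := sum_flipa (fun x => |S w x - θ|)
    rw [← h]
    apply Finset.sum_congr rfl
    intro x _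
    rw [S_flipa]
    rw [show -S w x - θ = -(S w x + θ) by ring, abs_neg]
  constructor
  · have : ∀ x : Fin n → Bool, 2 * |S w x| ≤ |S w x - θ| + |S w x + θ| := by
      intro x
      have := abs_add_le (S w x - θ) (S w x + θ)
      rw [show S w x - θ + (S w x + θ) = 2 * S w x by ring] at this
      rw [abs_mul, abs_two] at this
      linarith
    have hsum := Finset.sum_le_sum (fun x (_ : x ∈ Finset.univ) => this x)
    rw [Finset.sum_add_distrib, ← hpair] at hsum
    have h2 : ∑ x : Fin n → Bool, 2 * |S w x| = 2 * ∑ x, |S w x| := by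
      rw [Finset.mul_sum]
    rw [h2] at hsum
    linarith
  · have : ∀ x : Fin n → Bool, 2 * |θ| ≤ |S w x - θ| + |S w x + θ| := by
      intro x
      have := abs_add_le (S w x + θ) (-(S w x - θ))
      rw [show S w x + θ + -(S w x - θ) = 2 * θ by ring, abs_neg] at this
      rw [abs_mul, abs_two] at this
      linarith
    have hsum := Finset.sum_le_sum (fun x (_ : x ∈ Finset.univ) => this x)
    rw [Finset.sum_add_distrib, ← hpair] at hsum
    rw [Finset.sum_const, Finset.card_univ, nsmul_eq_mul, card_cube] at hsum
    linarith

theorem main (n : ℕ) (w : Fin n → ℝ) (θ : ℝ) (p : ℝ)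
    (hp : p = 1 - |(∑ x : Fin n → Bool,
        (if 0 ≤ (∑ j, w j * ch (x j)) - θ then (1 : ℝ) else -1)) / 2 ^ n|) :
    p ^ 2 / 2 ≤
      ∑ i : Fin n,
        ((∑ x : Fin n → Bool,
            (if 0 ≤ (∑ j, w j * ch (x j)) - θ then (1 : ℝ) else -1) * ch (x i)) / 2 ^ n) ^ 2 := by
  classical
  set N : ℝ := (2:ℝ)^n with hN
  have hNpos : (0:ℝ) < N := by positivity
  set f : (Fin n → Bool) → ℝ := fun x => if 0 ≤ S w x - θ then (1:ℝ) else -1 with hf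
  have hgoal : (∑ i : Fin n,
        ((∑ x : Fin n → Bool,
            (if 0 ≤ (∑ j, w j * ch (x j)) - θ then (1 : ℝ) else -1) * ch (x i)) / 2 ^ n) ^ 2)
      = ∑ i : Fin n, ((∑ x, f x * ch (x i)) / N) ^ 2 := rfl
  have hpM : p = 1 - |(∑ x, f x) / N| := hp
  rw [hgoal]
  set M : ℝ := ∑ x, f x with hM
  set c : Fin n → ℝ := fun i => ∑ x, f x * ch (x i) with hc
  -- basic facts
  have habsf : ∀ x, |f x| = 1 := by
    intro x
    simp only [hf]
    by_cases h : 0 ≤ S w x - θ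
    · rw [if_pos h]; norm_num
    · rw [if_neg h]; norm_num
  have hMle : |M| ≤ N := by
    calc |M| ≤ ∑ x, |f x| := Finset.abs_sum_le_sum_abs _ _
      _ = N := by
        rw [Finset.sum_congr rfl (fun x _ => habsf x), Finset.sum_const,
          Finset.card_univ, nsmul_eq_mul, card_cube, mul_one]
  -- T = Σ f·S
  set T : ℝ := ∑ x, f x * S w x with hT
  have hTeq : T = (∑ x, |S w x - θ|) + θ * M := by
    rw [hT, hM, Finset.mul_sum, ← Finset.sum_add_distrib]
    apply Finset.sum_congr rfl
    intro x _
    by_cases h : 0 ≤ S w x - θ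
    · rw [hf]; simp only [if_pos h]
      rw [abs_of_nonneg h]; ring
    · rw [hf]; simp only [if_neg h]
      push_neg at h
      rw [abs_of_neg (by linarith : S w x - θ < 0)]; ring
  have hTc : T = ∑ i, w i * c i := by
    rw [hT, hc]
    have : ∀ x, f x * S w x = ∑ i, w i * (f x * ch (x i)) := by
      intro x
      rw [S, Finset.mul_sum]
      apply Finset.sum_congr rfl
      intro i _; ring
    rw [Finset.sum_congr rfl (fun x _ => this x), Finset.sum_comm]
    apply Finset.sum_congr rfl
    intro i _
    rw [Finset.mul_sum]
  -- case split on σ² = 0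
  by_cases hσ : ∑ i, (w i)^2 = 0
  · -- all weights zero, f constant, p = 0
    have hwz : ∀ i, w i = 0 := by
      intro i
      have := Finset.sum_eq_zero_iff_of_nonneg (fun j (_ : j ∈ Finset.univ) => sq_nonneg (w j)) |>.mp hσ i (Finset.mem_univ i)
      exact pow_eq_zero_iff (n := 2) (by norm_num) |>.mp this
    have hS0 : ∀ x, S w x = 0 := by
      intro x
      rw [S]
      apply Finset.sum_eq_zero
      intro i _
      rw [hwz i, zero_mul]
    have hfc : ∀ x, f x = if 0 ≤ -θ then (1:ℝ) else -1 := by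
      intro x
      rw [hf]
      simp only [hS0 x, zero_sub]
    have hMval : M = N * (if 0 ≤ -θ then (1:ℝ) else -1) := by
      rw [hM, Finset.sum_congr rfl (fun x _ => hfc x), Finset.sum_const,
        Finset.card_univ, nsmul_eq_mul, card_cube]
    have hp0 : p = 0 := by
      rw [hpM, hMval]
      have hdiv : N * (if 0 ≤ -θ then (1:ℝ) else -1) / N = (if 0 ≤ -θ then (1:ℝ) else -1) := by
        rw [mul_comm, mul_div_assoc, div_self (ne_of_gt hNpos), mul_one]
      rw [hdiv]
      by_cases h : 0 ≤ -θ
      · rw [if_pos h]; norm_num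
      · rw [if_neg h]; norm_num
    rw [hp0]
    simp only [ne_eq, OfNat.ofNat_ne_zero, not_false_eq_true, zero_pow, zero_div]
    positivity
  · have hσpos : 0 < ∑ i, (w i)^2 := by
      rcases lt_or_eq_of_le (Finset.sum_nonneg (fun i _ => sq_nonneg (w i))) with h | h
      · exact h
      · exact absurd h.symm hσ
    set β : ℝ := Real.sqrt ((∑ i, (w i)^2)/2) with hβ
    have hβnn : 0 ≤ β := Real.sqrt_nonneg _
    have hβsq : β^2 = (∑ i, (w i)^2)/2 := Real.sq_sqrt (by positivity)
    -- lower bound on T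
    have hTlb : β * (N - |M|) ≤ T := by
      have h1 := (sum_abs_sub_ge w θ).1
      have h2 := (sum_abs_sub_ge w θ).2
      have hθM : -( |θ| * |M| ) ≤ θ * M := by
        have := neg_abs_le (θ * M)
        rw [abs_mul] at this
        linarith
      rcases le_total |θ| β with hcase | hcase
      · -- |θ| ≤ β : use Szarek
        have hSz := szarek w
        have hSabs : N * β ≤ ∑ x, |S w x| := by
          have hnn : 0 ≤ ∑ x, |S w x| := Finset.sum_nonneg (fun x _ => abs_nonneg _)
          nlinarith [hSz, hβsq, hNpos]
        have : θ * M ≥ - (β * |M|) := by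
          have h3 : |θ| * |M| ≤ β * |M| := mul_le_mul_of_nonneg_right hcase (abs_nonneg M)
          linarith
        rw [hTeq]
        nlinarith [h1, hSabs]
      · -- β ≤ |θ|
        rw [hTeq]
        have h3 : |θ| * |M| ≤ |θ| * N := mul_le_mul_of_nonneg_left hMle (abs_nonneg θ)
        nlinarith [h2, hθM, hMle, abs_nonneg θ, abs_nonneg M]
    have hTnn : 0 ≤ T := le_trans (mul_nonneg hβnn (by linarith)) hTlb
    -- Cauchy–Schwarz
    have hCS : T^2 ≤ (∑ i, (w i)^2) * ∑ i, (c i)^2 := by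
      rw [hTc]
      exact Finset.sum_mul_sq_le_sq_mul_sq Finset.univ w c
    have hT2 : (β * (N - |M|))^2 ≤ T^2 :=
      pow_le_pow_left₀ (mul_nonneg hβnn (by linarith)) hTlb 2
    have hclb : (N - |M|)^2 / 2 ≤ ∑ i, (c i)^2 := by
      have hexp : (β * (N - |M|))^2 = (∑ i, (w i)^2) * ((N - |M|)^2 / 2) := by
        rw [mul_pow, hβsq]; ring
      rw [hexp] at hT2
      have := le_trans hT2 hCS
      exact le_of_mul_le_mul_left this hσpos
    -- finish
    have hpval : p = (N - |M|) / N := by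
      rw [hpM, abs_div, abs_of_pos hNpos]
      field_simp
    rw [hpval]
    have hsum : ∑ i : Fin n, ((c i) / N) ^ 2 = (∑ i, (c i)^2) / N^2 := by
      rw [Finset.sum_div]
      apply Finset.sum_congr rfl
      intro i _
      rw [div_pow]
    rw [hsum, div_pow]
    have hfin : (N - |M|)^2 / N^2 / 2 = ((N - |M|)^2/2) / N^2 := by ring
    rw [hfin]
    have hN2 : (0:ℝ) < N^2 := by positivity
    exact div_le_div_of_nonneg_right hclb hN2.le |>.trans_eq rfl


end OS24


/-- For an LTF `f` with `1 − |E[f]| = p`, the degree-1 Fourier weight satisfies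
`W¹[f] ≥ p²/2`. -/
theorem ltf_bias_level_one (n : ℕ) (w : Fin n → ℝ) (θ : ℝ) (p : ℝ)
    (hp : p = 1 - |(∑ x : Fin n → Bool,
        (if 0 ≤ (∑ j, w j * (if x j then (1 : ℝ) else -1)) - θ then (1 : ℝ) else -1))
        / 2 ^ n|) :
    p ^ 2 / 2 ≤
      ∑ i : Fin n,
        ((∑ x : Fin n → Bool,
            (if 0 ≤ (∑ j, w j * (if x j then (1 : ℝ) else -1)) - θ then (1 : ℝ) else -1) *
              (if x i then (1 : ℝ) else -1)) / 2 ^ n) ^ 2 :=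
  OS24.main n w θ p hp
end
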